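/- arXiv:2401.16295 — 2 statements merged into one kernel-verified Lean document; each statement's English description precedes it below -/
import Mathlib

section
/- Suppose (v_k)_{k≥0} is a sequence of nonnegative reals with v_0 ≤ 1/4, v_1 ≤ 1/8, v_2 ≤ 1/16, and for every k ≥ 3, v_k ≤ Σ_{j=1}^{k-1} j · (4(k^2-3)/((k-2)(k-1)(k+1)(k+2))) · v_j · v_{k-1-j}. Then v_k ≤ 1/2^{k+2} for all k ≥ 0. -/
/-!
Induct on `k`. If `v j ≤ 2^{-(j+2)}` for all `j < k`, every product `v j * v (k-1-j)` is at most
`2^{-(k+3)}`, so the recursive bound is at most `c_k * (k-1)k/2 * 2^{-(k+3)}`, with `c_k` the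
coefficient in the recursion. It remains to check `c_k * (k-1)k/2 ≤ 2`, which after clearing
denominators is `k^2 - k - 4 ≥ 0`, true for `k ≥ 3`.
-/

open Finset

lemma sum_Icc_one_natCast (m : ℕ) : ∑ j ∈ Icc 1 m, (j : ℝ) = m * (m + 1) / 2 := by
  induction m with
  | zero => simp
  | succ n ih =>
    rw [sum_Icc_succ_top (by omega), ih]
    push_cast
    ring

lemma mul_le_inv_two_pow_of_le {a b : ℝ} {i j : ℕ} (ha : a ≤ 1 / 2 ^ (i + 2))
    (hb : b ≤ 1 / 2 ^ (j + 2)) (hb0 : 0 ≤ b) : a * b ≤ 1 / 2 ^ (i + j + 4) := by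
  calc a * b ≤ 1 / 2 ^ (i + 2) * (1 / 2 ^ (j + 2)) := mul_le_mul ha hb hb0 (by positivity)
    _ = 1 / 2 ^ (i + j + 4) := by rw [div_mul_div_comm, one_mul, ← pow_add]; ring_nf

lemma sum_Icc_mul_conv_le {v : ℕ → ℝ} {k : ℕ} {c : ℝ} (hv : ∀ j, 0 ≤ v j) (hc : 0 ≤ c)
    (hk : 1 ≤ k) (hbound : ∀ j < k, v j ≤ 1 / 2 ^ (j + 2)) :
    ∑ j ∈ Icc 1 (k - 1), (j : ℝ) * c * v j * v (k - 1 - j) ≤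
      c * (((k : ℝ) - 1) * k / 2) / 2 ^ (k + 3) := by
  calc ∑ j ∈ Icc 1 (k - 1), (j : ℝ) * c * v j * v (k - 1 - j)
      ≤ ∑ j ∈ Icc 1 (k - 1), (j : ℝ) * c * (1 / 2 ^ (k + 3)) := by
        refine sum_le_sum fun j hj => ?_
        have hjk := (mem_Icc.mp hj).2
        have hprod := mul_le_inv_two_pow_of_le (hbound j (by omega))
          (hbound (k - 1 - j) (by omega)) (hv _)
        rw [show j + (k - 1 - j) + 4 = k + 3 by omega] at hprod
        rw [mul_assoc _ (v j)]
        exact mul_le_mul_of_nonneg_left hprod (by positivity)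
    _ = c * (((k : ℝ) - 1) * k / 2) / 2 ^ (k + 3) := by
        rw [← sum_mul, ← sum_mul, sum_Icc_one_natCast, Nat.cast_sub hk]
        push_cast
        ring

lemma recursion_denom_pos {x : ℝ} (hx : 3 ≤ x) : 0 < (x - 2) * (x - 1) * (x + 1) * (x + 2) := by
  have h2 : 0 < x - 2 := by linarith
  have h1 : 0 < x - 1 := by linarith
  have h1' : 0 < x + 1 := by linarith
  have h2' : 0 < x + 2 := by linarith
  positivity

lemma recursion_coeff_nonneg {x : ℝ} (hx : 3 ≤ x) :
    0 ≤ 4 * (x ^ 2 - 3) / ((x - 2) * (x - 1) * (x + 1) * (x + 2)) :=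
  div_nonneg (by nlinarith) (recursion_denom_pos hx).le

lemma recursion_coeff_mul_le_two {x : ℝ} (hx : 3 ≤ x) :
    4 * (x ^ 2 - 3) / ((x - 2) * (x - 1) * (x + 1) * (x + 2)) * ((x - 1) * x / 2) ≤ 2 := by
  rw [div_mul_eq_mul_div, div_le_iff₀ (recursion_denom_pos hx)]
  nlinarith [sq_nonneg (x - 3)]

theorem seq_bound (v : ℕ → ℝ) (hv : ∀ k, 0 ≤ v k)
    (h0 : v 0 ≤ 1 / 4) (h1 : v 1 ≤ 1 / 8) (h2 : v 2 ≤ 1 / 16)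
    (hrec : ∀ k, 3 ≤ k →
      v k ≤ ∑ j ∈ Finset.Icc 1 (k - 1),
        (j : ℝ) * (4 * ((k : ℝ) ^ 2 - 3) /
          (((k : ℝ) - 2) * ((k : ℝ) - 1) * ((k : ℝ) + 1) * ((k : ℝ) + 2))) *
          v j * v (k - 1 - j)) :
    ∀ k, v k ≤ 1 / 2 ^ (k + 2) := by
  intro k
  induction k using Nat.strong_induction_on with
  | _ k ih =>
  match k, ih with
  | 0, _ => norm_num [h0]
  | 1, _ => norm_num [h1]
  | 2, _ => norm_num [h2]
  | n + 3, ih =>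
    have hx : (3 : ℝ) ≤ (n + 3 : ℕ) := by exact_mod_cast Nat.le_add_left 3 n
    calc v (n + 3) ≤ _ := hrec (n + 3) (by omega)
      _ ≤ _ := sum_Icc_mul_conv_le hv (recursion_coeff_nonneg hx) (by omega) ih
      _ ≤ 2 / 2 ^ (n + 3 + 3) := by gcongr; exact recursion_coeff_mul_le_two hx
      _ = 1 / 2 ^ (n + 3 + 2) := by rw [pow_succ]; ring
end

section
/- Let ψ(x,z) = (Iz + (1/2)V(x))e^{xz} where V ∈ M_N(ℂ[x]) satisfies V''(x) = V'(x)V(x). Then the matrix Schrödinger operator L = -∂_x² + V'(x) satisfies Lψ(x,z) = -z²ψ(x,z) for all x, z. -/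
open Polynomial

/-- The eigenfunction ψ(x,z) = (zI + (1/2)V(x)) e^{xz}, entrywise. -/
noncomputable def psiFun {N : ℕ} (V : Matrix (Fin N) (Fin N) (Polynomial ℂ))
    (x z : ℂ) : Matrix (Fin N) (Fin N) ℂ :=
  Complex.exp (x * z) •
    (z • (1 : Matrix (Fin N) (Fin N) ℂ) +
      (1 / 2 : ℂ) • Matrix.of fun i j => (V i j).eval x)

lemma deriv_exp_poly (z : ℂ) (q : Polynomial ℂ) :
    deriv (fun t : ℂ => Complex.exp (t * z) * q.eval t)
      = fun t : ℂ => Complex.exp (t * z) * ((C z * q + derivative q).eval t) := by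
  funext t
  have h1 : HasDerivAt (fun t : ℂ => Complex.exp (t * z)) (Complex.exp (t * z) * z) t := by
    simpa using ((hasDerivAt_id t).mul_const z).cexp
  have h2 := q.hasDerivAt t
  have h3 : HasDerivAt (fun t : ℂ => Complex.exp (t * z) * q.eval t)
      (Complex.exp (t * z) * z * q.eval t + Complex.exp (t * z) * (derivative q).eval t) t :=
    h1.mul h2
  rw [h3.deriv]
  simp [eval_add, eval_mul, eval_C]
  ring

theorem schrodinger_eigen {N : ℕ} (V : Matrix (Fin N) (Fin N) (Polynomial ℂ))
    (hV : (Matrix.of fun i j => derivative (derivative (V i j))) =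
      (Matrix.of fun i j => derivative (V i j)) * V) :
    ∀ x z : ℂ,
      (Matrix.of fun i j =>
          -(iteratedDeriv 2 (fun t : ℂ => psiFun V t z i j) x)) +
        (Matrix.of fun i j => (derivative (V i j)).eval x) * psiFun V x z =
      (-(z ^ 2)) • psiFun V x z := by
  intro x z
  ext i j
  have hvv : (derivative (derivative (V i j))).eval x
      = ∑ k, (derivative (V i k)).eval x * (V k j).eval x := by
    have h := congrFun (congrFun hV i) j
    simp only [Matrix.of_apply, Matrix.mul_apply] at h
    simp [h, eval_finset_sum]
  set q : Polynomial ℂ := C (z * (1 : Matrix (Fin N) (Fin N) ℂ) i j) + C (1/2) * V i j with hq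
  have hf : (fun t : ℂ => psiFun V t z i j)
      = fun t : ℂ => Complex.exp (t * z) * q.eval t := by
    funext t
    simp [psiFun, hq, Matrix.add_apply, Matrix.smul_apply, Matrix.one_apply, smul_eq_mul]
  rw [Matrix.add_apply, Matrix.of_apply, hf, iteratedDeriv_succ, iteratedDeriv_one,
    deriv_exp_poly, deriv_exp_poly, Matrix.mul_apply, Matrix.smul_apply]
  simp only [psiFun, Matrix.smul_apply, Matrix.add_apply, Matrix.one_apply, Matrix.of_apply,
    smul_eq_mul, derivative_add, derivative_mul, derivative_C, eval_add, eval_mul, eval_C,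
    zero_mul, add_zero, zero_add, hq, mul_ite, ite_mul, mul_zero, zero_mul, mul_one, one_mul]
  rw [hvv]
  simp only [mul_add, Finset.mul_sum, mul_ite, mul_zero, Finset.sum_add_distrib,
    Finset.sum_ite_eq', Finset.mem_univ, if_true]
  have hs : ∑ k, (derivative (V i k)).eval x * (Complex.exp (x*z) * (1/2 * (V k j).eval x))
      = ∑ k, Complex.exp (x*z) * (1/2 * ((derivative (V i k)).eval x * (V k j).eval x)) :=
    Finset.sum_congr rfl fun k _ => by ring
  rw [hs]
  by_cases h : i = j <;> simp only [h, if_true, if_false] <;> ring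
end
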